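/- The optimal expected cancellation cost is nondecreasing in the assigned patient set: for all S ⊆ S' ⊆ P and every y ≥ 1, one has Q(S, y) ≤ Q(S', y). -/
import Mathlib


open Finset

/-- The single-OR cancellation cost of a set `A` of patients assigned to an operating
room with time limit `B`, for duration function `T`. -/
noncomputable def qcost {α : Type*} [DecidableEq α] (c T : α → ℝ) {B : ℝ} (hB : 0 ≤ B)
    (A : Finset α) : ℝ :=
  (A.powerset.filter (fun Z => ∑ p ∈ Z, T p ≤ B)).inf'
    ⟨∅, by simp [hB]⟩ (fun Z => ∑ p ∈ A \ Z, c p)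

/-- The optimal expected cancellation cost of assigning the patients of `S` to `y`
opened operating rooms: the minimum, over assignments `a` of patients to ORs, of the
average over scenarios `s ∈ 𝒮` of the sum over ORs `r` of the single-OR cancellation
cost of the patients of `S` assigned to `r`. -/
noncomputable def Qexp {α σ : Type*} [DecidableEq α] (c : α → ℝ) (𝒮 : Finset σ)
    (T : σ → α → ℝ) {B : ℝ} (hB : 0 ≤ B) (S : Finset α) (y : ℕ) : ℝ :=
  sInf { v : ℝ | ∃ a : α → Fin y,
    v = (𝒮.card : ℝ)⁻¹ *
      ∑ s ∈ 𝒮, ∑ r : Fin y, qcost c (T s) hB (S.filter (fun p => a p = r)) }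

lemma qcost_nonneg {α : Type*} [DecidableEq α] (c T : α → ℝ) {B : ℝ} (hB : 0 ≤ B)
    (A : Finset α) (hc : ∀ p ∈ A, 0 ≤ c p) : 0 ≤ qcost c T hB A := by
  apply Finset.le_inf'
  intro Z hZ
  exact Finset.sum_nonneg fun p hp => hc p (Finset.mem_sdiff.mp hp).1

lemma qcost_mono {α : Type*} [DecidableEq α] (c T : α → ℝ) {B : ℝ} (hB : 0 ≤ B)
    {A A' : Finset α} (hAA' : A ⊆ A') (hc : ∀ p ∈ A', 0 ≤ c p)
    (hT : ∀ p ∈ A', 0 ≤ T p) : qcost c T hB A ≤ qcost c T hB A' := by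
  apply Finset.le_inf'
  intro Z hZ
  simp only [Finset.mem_filter, Finset.mem_powerset] at hZ
  obtain ⟨hZA', hZB⟩ := hZ
  have hmem : Z ∩ A ∈ A.powerset.filter (fun Z => ∑ p ∈ Z, T p ≤ B) := by
    simp only [Finset.mem_filter, Finset.mem_powerset]
    refine ⟨Finset.inter_subset_right, le_trans ?_ hZB⟩
    exact Finset.sum_le_sum_of_subset_of_nonneg Finset.inter_subset_left
      (fun p hp _ => hT p (hZA' hp))
  refine le_trans (Finset.inf'_le _ hmem) ?_
  rw [sdiff_inter_self_right]
  exact Finset.sum_le_sum_of_subset_of_nonneg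
    (Finset.sdiff_subset_sdiff hAA' le_rfl)
    (fun p hp _ => hc p (Finset.mem_sdiff.mp hp).1)

/-- The optimal expected cancellation cost is nondecreasing in the assigned patient
set: for all `S ⊆ S' ⊆ P` and every `y ≥ 1`, `Q(S, y) ≤ Q(S', y)`. -/
theorem Qexp_monotone_patients {α σ : Type*} [DecidableEq α]
    (P : Finset α) (c : α → ℝ) (𝒮 : Finset σ) (h𝒮 : 𝒮.Nonempty)
    (T : σ → α → ℝ) (B : ℝ)
    (hc : ∀ p ∈ P, 0 ≤ c p) (hT : ∀ s ∈ 𝒮, ∀ p ∈ P, 0 ≤ T s p) (hB : 0 ≤ B)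
    (S S' : Finset α) (hSS' : S ⊆ S') (hS' : S' ⊆ P) (y : ℕ) (hy : 1 ≤ y) :
    Qexp c 𝒮 T hB S y ≤ Qexp c 𝒮 T hB S' y := by

  have hbdd : BddBelow { v : ℝ | ∃ a : α → Fin y,
      v = (𝒮.card : ℝ)⁻¹ *
        ∑ s ∈ 𝒮, ∑ r : Fin y, qcost c (T s) hB (S.filter (fun p => a p = r)) } := by
    refine ⟨0, ?_⟩
    rintro v ⟨a, rfl⟩
    apply mul_nonneg (by positivity)
    apply Finset.sum_nonneg; intro s hs
    apply Finset.sum_nonneg; intro r _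
    exact qcost_nonneg c (T s) hB _
      (fun p hp => hc p (hS' (hSS' (Finset.mem_filter.mp hp).1)))
  refine le_csInf ⟨_, ⟨fun _ => (⟨0, hy⟩ : Fin y), rfl⟩⟩ ?_
  rintro v ⟨a, rfl⟩
  refine le_trans (csInf_le hbdd ⟨a, rfl⟩) ?_
  apply mul_le_mul_of_nonneg_left _ (by positivity)
  apply Finset.sum_le_sum; intro s hs
  apply Finset.sum_le_sum; intro r _
  exact qcost_mono c (T s) hB
    (Finset.filter_subset_filter _ hSS')
    (fun p hp => hc p (hS' (Finset.mem_filter.mp hp).1))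
    (fun p hp => hT s hs p (hS' (Finset.mem_filter.mp hp).1))
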